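/- arXiv:1605.02885 — 2 statements merged into one kernel-verified Lean document; each statement's English description precedes it below -/
import Mathlib

section
/- Critical point identity: with M = (x₁,…,x_{i-1}, ℓᵢ,…,ℓₙ), x_k > 0, S_x = ∑_{j<i} x_j, Sᵢ = ∑_{j≥i} ℓⱼ, Hᵢ the entropy of the tail, the partial derivative of H(M) with respect to x_k equals (1/(S_x+Sᵢ)²)·(−Sᵢ Hᵢ + Sᵢ log(Sᵢ/x_k) + ∑_{j≠k, j<i} x_j log(x_j/x_k)). -/
open Finset

noncomputable def pentropy {ι : Type*} [Fintype ι] (ℓ : ι → ℝ) : ℝ :=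
  -∑ i, (ℓ i / ∑ j, ℓ j) * Real.log (ℓ i / ∑ j, ℓ j)

/-! Writing `T = ∑ f`, the entropy is `log T - (∑ f log f) / T`. As a function of one mass
`y = f k`, the others fixed (with sum `c` and `∑ f log f = b`), it is
`log (c + y) - (b + y log y) / (c + y)`, with derivative `(b - c log y) / (c + y)²`,
i.e. `(∑ⱼ fⱼ log (fⱼ / f k)) / T²`. For the bars `M = (x, ℓ)`, the tail part of that sum is
`∑ ℓⱼ log ℓⱼ - Sᵢ log x_k = -Sᵢ Hᵢ + Sᵢ log (Sᵢ / x_k)`. -/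

open Real

lemma mul_log_div_of_ne_zero (t : ℝ) {a : ℝ} (ha : a ≠ 0) :
    t * log (t / a) = t * log t - t * log a := by
  rcases eq_or_ne t 0 with rfl | ht
  · simp
  · rw [log_div ht ha]; ring

lemma sum_mul_log_div_of_ne_zero {ι : Type*} (s : Finset ι) (f : ι → ℝ) {a : ℝ} (ha : a ≠ 0) :
    ∑ j ∈ s, f j * log (f j / a) = ∑ j ∈ s, f j * log (f j) - (∑ j ∈ s, f j) * log a := by
  rw [sum_mul, ← sum_sub_distrib]
  exact sum_congr rfl fun j _ => mul_log_div_of_ne_zero (f j) ha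

section

variable {ι : Type*} [Fintype ι]

/-- When `∑ f = 0` both sides are `0`, by the junk values of `/` and `log`. -/
lemma pentropy_eq_log_sum_sub (f : ι → ℝ) :
    pentropy f = log (∑ i, f i) - (∑ i, f i * log (f i)) / ∑ i, f i := by
  unfold pentropy
  set T := ∑ i, f i
  rcases eq_or_ne T 0 with hT | hT
  · simp [hT]
  have hterm : ∀ i, (f i / T) * log (f i / T) = (f i * log (f i) - f i * log T) / T := fun i => by
    rw [div_mul_eq_mul_div, mul_log_div_of_ne_zero _ hT]
  simp only [hterm, ← sum_div, sum_sub_distrib, ← sum_mul]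
  field_simp
  ring

lemma sum_mul_pentropy_of_nonneg (f : ι → ℝ) (hf : ∀ i, 0 ≤ f i) :
    (∑ i, f i) * pentropy f = (∑ i, f i) * log (∑ i, f i) - ∑ i, f i * log (f i) := by
  rcases eq_or_ne (∑ i, f i) 0 with hT | hT
  · have hzero : ∀ i, f i = 0 := fun i =>
      (sum_eq_zero_iff_of_nonneg fun j _ => hf j).1 hT i (mem_univ i)
    simp [hzero]
  · rw [pentropy_eq_log_sum_sub, mul_sub, mul_div_cancel₀ _ hT]

lemma sum_comp_update [DecidableEq ι] {α M : Type*} [AddCommMonoid M] (φ : α → M)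
    (f : ι → α) (k : ι) (y : α) :
    ∑ i, φ (Function.update f k y i) = φ y + ∑ j ∈ univ.erase k, φ (f j) := by
  rw [← Function.comp_def φ, Function.comp_update, sum_update_of_mem (mem_univ k),
    sdiff_singleton_eq_erase]
  rfl

end

lemma hasDerivAt_log_add_sub_add_mul_log_div {a : ℝ} (b c : ℝ) (ha : a ≠ 0) (hca : c + a ≠ 0) :
    HasDerivAt (fun y => log (c + y) - (b + y * log y) / (c + y))
      ((b - c * log a) / (c + a) ^ 2) a := by
  have hsum : HasDerivAt (fun y => c + y) 1 a := (hasDerivAt_id a).const_add c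
  have hquot := ((hasDerivAt_mul_log ha).const_add b).fun_div hsum hca
  refine ((hsum.log hca).sub hquot).congr_deriv ?_
  field_simp
  ring

/-- The `j = k` summand is `f k * log 1 = 0`. -/
theorem hasDerivAt_pentropy_update {ι : Type*} [Fintype ι] [DecidableEq ι] (f : ι → ℝ) (k : ι)
    (hk : f k ≠ 0) (hT : ∑ j, f j ≠ 0) :
    HasDerivAt (fun y => pentropy (Function.update f k y))
      ((∑ j, f j * log (f j / f k)) / (∑ j, f j) ^ 2) (f k) := by
  set c := ∑ j ∈ univ.erase k, f j
  set b := ∑ j ∈ univ.erase k, f j * log (f j)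
  have hprofile : (fun y => pentropy (Function.update f k y)) =
      fun y => log (c + y) - (b + y * log y) / (c + y) := by
    funext y
    have hmass : ∑ i, Function.update f k y i = c + y :=
      (sum_comp_update id f k y).trans (add_comm _ _)
    have hmass_log : ∑ i, Function.update f k y i * log (Function.update f k y i) =
        b + y * log y :=
      (sum_comp_update (fun t => t * log t) f k y).trans (add_comm _ _)
    rw [pentropy_eq_log_sum_sub, hmass, hmass_log]
  have htotal : c + f k = ∑ j, f j := sum_erase_add _ _ (mem_univ k)
  have hnumer : b - c * log (f k) = ∑ j, f j * log (f j / f k) := by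
    rw [← sum_mul_log_div_of_ne_zero _ _ hk]
    exact sum_erase _ (by simp [div_self hk])
  rw [hprofile, ← htotal, ← hnumer]
  exact hasDerivAt_log_add_sub_add_mul_log_div b c hk (htotal ▸ hT)

/-- `m` plays the role of `i-1`: the free bars are `x : Fin m → ℝ`, the fixed
tail is `ℓ : Fin k → ℝ`. -/
theorem partial_derivative_of_entropy_general (m k : ℕ)
    (ℓ : Fin k → ℝ) (hℓ : ∀ j, 0 < ℓ j)
    (x : Fin m → ℝ) (hx : ∀ j, 0 < x j) (k' : Fin m) :
    HasDerivAt (fun y : ℝ => pentropy (Sum.elim (Function.update x k' y) ℓ))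
      ((1 / ((∑ j, x j) + ∑ j, ℓ j) ^ 2) *
        (-((∑ j, ℓ j) * pentropy ℓ) +
          (∑ j, ℓ j) * Real.log ((∑ j, ℓ j) / x k') +
          ∑ j ∈ Finset.univ.erase k', x j * Real.log (x j / x k')))
      (x k') := by
  have htotal : ∑ j, Sum.elim x ℓ j = (∑ j, x j) + ∑ j, ℓ j := Fintype.sum_sum_type _
  have hpos : 0 < ∑ j, Sum.elim x ℓ j :=
    htotal ▸ add_pos_of_pos_of_nonneg (sum_pos (fun j _ => hx j) ⟨k', mem_univ _⟩)
      (sum_nonneg fun j _ => (hℓ j).le)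
  have hderiv := hasDerivAt_pentropy_update (Sum.elim x ℓ) (.inl k') (hx k').ne' hpos.ne'
  simp only [Sum.update_elim_inl, Sum.elim_inl] at hderiv
  convert hderiv using 1
  have hfree : ∑ j ∈ univ.erase k', x j * log (x j / x k') = ∑ j, x j * log (x j / x k') :=
    sum_erase _ (by simp [div_self (hx k').ne'])
  rw [Fintype.sum_sum_type, htotal]
  simp only [Sum.elim_inl, Sum.elim_inr]
  rw [hfree, sum_mul_pentropy_of_nonneg ℓ fun j => (hℓ j).le,
    mul_log_div_of_ne_zero _ (hx k').ne', sum_mul_log_div_of_ne_zero univ ℓ (hx k').ne']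
  ring

/-- `m` plays the role of `i-1`: the free bars are `x : Fin m → ℝ`, the fixed
tail is `ℓ : Fin k → ℝ` (nonempty since `i ≤ n`).  The partial derivative of
`H(M)` with respect to `x k'` is the stated expression. -/
theorem partial_derivative_of_entropy (m k : ℕ) (hk : 0 < k)
    (ℓ : Fin k → ℝ) (hℓ : ∀ j, 0 < ℓ j)
    (x : Fin m → ℝ) (hx : ∀ j, 0 < x j) (k' : Fin m) :
    HasDerivAt (fun y : ℝ => pentropy (Sum.elim (Function.update x k' y) ℓ))
      ((1 / ((∑ j, x j) + ∑ j, ℓ j) ^ 2) *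
        (-((∑ j, ℓ j) * pentropy ℓ) +
          (∑ j, ℓ j) * Real.log ((∑ j, ℓ j) / x k') +
          ∑ j ∈ Finset.univ.erase k', x j * Real.log (x j / x k')))
      (x k') :=
  partial_derivative_of_entropy_general m k ℓ hℓ x hx k'
end

section
/- Strict monotonicity of the replacement entropies: with ℓ₁ ≥ ⋯ ≥ ℓₙ > 0 not all equal, and L'(i) defined by replacing the first i−1 bars by copies of Sᵢ/e^{Hᵢ}, if ℓ_{i} > ℓ_{j} for some i < j ≤ n then H(L'(i)) < H(L'(j)) for those indices i < j. -/
/-!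
Write `S`, `H` for the total length and the entropy of a family of bars `s`, and
`c = S / e^H`; since `H = log S - (∑ ℓ log ℓ) / S`, `c` is the `ℓ`-weighted geometric mean of
the lengths. Adding `m` bars of length `c` gives entropy `log (m + e^H)`, so
`H(L'(i)) = log (i - 1 + e^{Hᵢ})`. Adding one bar of length `x` instead gives entropy at most
`log (1 + e^H)`, with equality only for `x = c`: after clearing denominators this is the
log-sum inequality for the pairs `(x, c)` and `(S, S)`. Hence `k + e^{H_k}` is nondecreasing in
`k`, and it increases strictly from `i` to `i + 1`, because a later bar shorter than `ℓ i` pushes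
the geometric mean of the tail strictly below `ℓ i`.
-/

open Finset

noncomputable def pentropyOn (s : Finset ℕ) (f : ℕ → ℝ) : ℝ :=
  -∑ i ∈ s, (f i / ∑ j ∈ s, f j) * Real.log (f i / ∑ j ∈ s, f j)

open Real

lemma add_mul_log_add_div_add_lt {a b x y : ℝ} (ha : 0 < a) (hb : 0 < b) (hx : 0 < x)
    (hy : 0 < y) (hne : x / a ≠ y / b) :
    (x + y) * log ((x + y) / (a + b)) < x * log (x / a) + y * log (y / b) := by
  have hab : 0 < a + b := by positivity
  have hconv := strictConvexOn_mul_log.2 (Set.mem_Ici.2 (div_pos hx ha).le)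
    (Set.mem_Ici.2 (div_pos hy hb).le) hne (div_pos ha hab) (div_pos hb hab)
    (by field_simp)
  have hmean : a / (a + b) * (x / a) + b / (a + b) * (y / b) = (x + y) / (a + b) := by
    field_simp
  simp only [smul_eq_mul, hmean] at hconv
  calc (x + y) * log ((x + y) / (a + b))
      = (a + b) * ((x + y) / (a + b) * log ((x + y) / (a + b))) := by field_simp
    _ < (a + b) * (a / (a + b) * (x / a * log (x / a)) + b / (a + b) * (y / b * log (y / b))) :=
      mul_lt_mul_of_pos_left hconv hab
    _ = x * log (x / a) + y * log (y / b) := by field_simp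

section

variable {s : Finset ℕ} {f : ℕ → ℝ}

lemma pentropyOn_eq_log_sum_sub (hf : ∀ t ∈ s, 0 < f t) (hs : s.Nonempty) :
    pentropyOn s f = log (∑ j ∈ s, f j) - (∑ j ∈ s, f j * log (f j)) / ∑ j ∈ s, f j := by
  have hS : 0 < ∑ j ∈ s, f j := sum_pos hf hs
  have hterm : ∀ t ∈ s, f t / (∑ j ∈ s, f j) * log (f t / ∑ j ∈ s, f j)
      = f t * log (f t) / (∑ j ∈ s, f j) - f t / (∑ j ∈ s, f j) * log (∑ j ∈ s, f j) := by
    intro t ht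
    rw [log_div (hf t ht).ne' hS.ne']
    ring
  rw [pentropyOn, sum_congr rfl hterm, sum_sub_distrib, ← sum_div, ← sum_mul, ← sum_div,
    div_self hS.ne', one_mul]
  ring

lemma sum_div_exp_pentropyOn (hf : ∀ t ∈ s, 0 < f t) (hs : s.Nonempty) :
    (∑ j ∈ s, f j) / exp (pentropyOn s f)
      = exp ((∑ j ∈ s, f j * log (f j)) / ∑ j ∈ s, f j) := by
  rw [pentropyOn_eq_log_sum_sub hf hs, exp_sub, exp_log (sum_pos hf hs),
    div_div_cancel₀ (sum_pos hf hs).ne']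

lemma sum_div_exp_pentropyOn_lt {x : ℝ} (hf : ∀ t ∈ s, 0 < f t) (hle : ∀ t ∈ s, f t ≤ x)
    (hlt : ∃ t ∈ s, f t < x) :
    (∑ j ∈ s, f j) / exp (pentropyOn s f) < x := by
  obtain ⟨t₀, ht₀, hlt₀⟩ := hlt
  have hs : s.Nonempty := ⟨t₀, ht₀⟩
  rw [sum_div_exp_pentropyOn hf hs, ← exp_log ((hf t₀ ht₀).trans hlt₀), exp_lt_exp,
    div_lt_iff₀ (sum_pos hf hs), mul_comm, sum_mul]
  refine sum_lt_sum (fun t ht => ?_) ⟨t₀, ht₀, ?_⟩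
  · exact mul_le_mul_of_nonneg_left (log_le_log (hf t ht) (hle t ht)) (hf t ht).le
  · exact mul_lt_mul_of_pos_left (log_lt_log (hf t₀ ht₀) hlt₀) (hf t₀ ht₀)

lemma pentropyOn_union_eq_log_card_add {r : Finset ℕ} {g : ℕ → ℝ} (hrs : Disjoint r s)
    (hf : ∀ t ∈ s, 0 < f t) (hs : s.Nonempty) (hgs : ∀ t ∈ s, g t = f t)
    (hgr : ∀ t ∈ r, g t = (∑ j ∈ s, f j) / exp (pentropyOn s f)) :
    pentropyOn (r ∪ s) g = log (#r + exp (pentropyOn s f)) := by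
  set S := ∑ j ∈ s, f j
  set A := ∑ j ∈ s, f j * log (f j)
  have hS : 0 < S := sum_pos hf hs
  set c := exp (A / S) with hc
  have hc0 : 0 < c := exp_pos _
  have hlogc : log c = A / S := log_exp _
  have hgr' : ∀ t ∈ r, g t = c := fun t ht => (hgr t ht).trans (sum_div_exp_pentropyOn hf hs)
  have hexp : exp (pentropyOn s f) = S / c := by
    rw [hc, ← sum_div_exp_pentropyOn hf hs, div_div_cancel₀ hS.ne']
  have hg : ∀ t ∈ r ∪ s, 0 < g t := by
    intro t ht
    rcases mem_union.1 ht with h | h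
    · rw [hgr' t h]; positivity
    · rw [hgs t h]; exact hf t h
  have hsum : ∑ t ∈ r ∪ s, g t = #r * c + S := by
    rw [sum_union hrs, sum_congr rfl hgr', sum_congr rfl hgs, sum_const, nsmul_eq_mul]
  have hsumlog : ∑ t ∈ r ∪ s, g t * log (g t) = (#r * c + S) * (A / S) := by
    have hsum_r : ∑ t ∈ r, g t * log (g t) = #r * (c * log c) := by
      rw [sum_congr rfl fun t ht => by rw [hgr' t ht], sum_const, nsmul_eq_mul]
    have hsum_s : ∑ t ∈ s, g t * log (g t) = A := sum_congr rfl fun t ht => by rw [hgs t ht]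
    rw [sum_union hrs, hsum_r, hsum_s, hlogc]
    field_simp
  have hT : 0 < #r * c + S := by positivity
  rw [pentropyOn_eq_log_sum_sub hg (hs.mono subset_union_right), hsum, hsumlog,
    mul_div_cancel_left₀ _ hT.ne', hexp, ← hlogc, ← log_div hT.ne' hc0.ne']
  congr 1
  field_simp

lemma exp_pentropyOn_insert_lt {k : ℕ} (hk : k ∉ s) (hf : ∀ t ∈ insert k s, 0 < f t)
    (hs : s.Nonempty) (hne : f k ≠ (∑ j ∈ s, f j) / exp (pentropyOn s f)) :
    exp (pentropyOn (insert k s) f) < 1 + exp (pentropyOn s f) := by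
  have hfs : ∀ t ∈ s, 0 < f t := fun t ht => hf t (mem_insert_of_mem ht)
  have hx : 0 < f k := hf k (mem_insert_self k s)
  set S := ∑ j ∈ s, f j
  set A := ∑ j ∈ s, f j * log (f j)
  set x := f k
  have hS : 0 < S := sum_pos hfs hs
  set c := exp (A / S) with hc
  have hc0 : 0 < c := exp_pos _
  rw [sum_div_exp_pentropyOn hfs hs] at hne
  have hexp : exp (pentropyOn s f) = S / c := by
    rw [hc, ← sum_div_exp_pentropyOn hfs hs, div_div_cancel₀ hS.ne']
  have hlogsum := add_mul_log_add_div_add_lt hc0 hS hx hS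
    (by rwa [div_self hS.ne', ne_eq, div_eq_one_iff_eq hc0.ne'])
  rw [div_self hS.ne', log_one, mul_zero, add_zero, log_div (by positivity) (by positivity),
    log_div hx.ne' hc0.ne', hc, log_exp, ← hc] at hlogsum
  have hT : 0 < x + S := by positivity
  have hone_add_exp : 1 + S / c = exp (log (c + S) - A / S) := by
    rw [exp_sub, exp_log (by positivity), ← hc]
    field_simp
  rw [pentropyOn_eq_log_sum_sub hf (insert_nonempty _ _), sum_insert hk, sum_insert hk, hexp,
    hone_add_exp, exp_lt_exp]
  refine lt_of_mul_lt_mul_left ?_ hT.le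
  have hlhs : (x + S) * (log (x + S) - (x * log x + A) / (x + S))
      = (x + S) * log (x + S) - x * log x - A := by
    field_simp
    ring
  have hrhs : (x + S) * (log (c + S) - A / S) = (x + S) * log (c + S) - x * (A / S) - A := by
    field_simp
    ring
  rw [hlhs, hrhs]
  linarith

lemma exp_pentropyOn_insert_le {k : ℕ} (hk : k ∉ s) (hf : ∀ t ∈ insert k s, 0 < f t)
    (hs : s.Nonempty) :
    exp (pentropyOn (insert k s) f) ≤ 1 + exp (pentropyOn s f) := by
  by_cases hne : f k = (∑ j ∈ s, f j) / exp (pentropyOn s f)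
  · have hfs : ∀ t ∈ s, 0 < f t := fun t ht => hf t (mem_insert_of_mem ht)
    rw [insert_eq, pentropyOn_union_eq_log_card_add (disjoint_singleton_left.2 hk) hfs hs
      (fun _ _ => rfl) (by simpa using hne), card_singleton, Nat.cast_one,
      exp_log (by positivity)]
  · exact (exp_pentropyOn_insert_lt hk hf hs hne).le

end

section

variable {ℓ : ℕ → ℝ} {n : ℕ}

lemma add_exp_pentropyOn_Icc_le_add {i j : ℕ} (hpos : ∀ t ∈ Icc i n, 0 < ℓ t) (hij : i ≤ j)
    (hjn : j ≤ n) :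
    i + exp (pentropyOn (Icc i n) ℓ) ≤ j + exp (pentropyOn (Icc j n) ℓ) := by
  induction j, hij using Nat.le_induction with
  | base => rfl
  | succ j hij ih =>
    have hstep : exp (pentropyOn (Icc j n) ℓ) ≤ 1 + exp (pentropyOn (Icc (j + 1) n) ℓ) := by
      rw [← insert_Icc_add_one_left_eq_Icc (by omega : j ≤ n)]
      refine exp_pentropyOn_insert_le (by simp) (fun t ht => hpos t ?_) (nonempty_Icc.2 hjn)
      rw [insert_Icc_add_one_left_eq_Icc (by omega)] at ht
      exact Icc_subset_Icc_left hij ht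
    push_cast
    linarith [ih (by omega)]

lemma pentropyOn_replace_Icc {i : ℕ} (hpos : ∀ t ∈ Icc i n, 0 < ℓ t) (hi : 1 ≤ i) (hin : i ≤ n) :
    pentropyOn (Icc 1 n)
        (fun t => if t < i then (∑ u ∈ Icc i n, ℓ u) / exp (pentropyOn (Icc i n) ℓ) else ℓ t)
      = log ((i - 1 : ℝ) + exp (pentropyOn (Icc i n) ℓ)) := by
  have hsplit : Icc 1 n = Ico 1 i ∪ Icc i n := by
    ext t
    simp only [mem_Icc, mem_union, mem_Ico]
    omega
  have hdisj : Disjoint (Ico 1 i) (Icc i n) := by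
    rw [disjoint_left]
    intro t ht ht'
    simp only [mem_Icc, mem_Ico] at ht ht'
    omega
  rw [hsplit, pentropyOn_union_eq_log_card_add hdisj hpos (nonempty_Icc.2 hin)
    (fun t ht => if_neg (by simp only [mem_Icc] at ht; omega))
    (fun t ht => if_pos (by simp only [mem_Ico] at ht; omega)), Nat.card_Ico, Nat.cast_sub hi,
    Nat.cast_one]

end

/-- Bars indexed by `1,…,n` in decreasing order; `L'(i)` replaces the bars
before index `i` by copies of `Sᵢ/e^{Hᵢ}`.  If `ℓ i > ℓ j` for some
`i < j ≤ n` then `H(L'(i)) < H(L'(j))`. -/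
theorem replaced_entropies_strict_mono (n : ℕ) (ℓ : ℕ → ℝ)
    (hpos : ∀ t ∈ Finset.Icc 1 n, 0 < ℓ t)
    (hdec : ∀ s ∈ Finset.Icc 1 n, ∀ t ∈ Finset.Icc 1 n, s ≤ t → ℓ t ≤ ℓ s)
    (i j : ℕ) (hi1 : 1 ≤ i) (hij : i < j) (hjn : j ≤ n) (hstrict : ℓ j < ℓ i) :
    pentropyOn (Finset.Icc 1 n)
        (fun t => if t < i then
            (∑ u ∈ Finset.Icc i n, ℓ u) / Real.exp (pentropyOn (Finset.Icc i n) ℓ)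
          else ℓ t) <
      pentropyOn (Finset.Icc 1 n)
        (fun t => if t < j then
            (∑ u ∈ Finset.Icc j n, ℓ u) / Real.exp (pentropyOn (Finset.Icc j n) ℓ)
          else ℓ t) := by
  have hin : i ≤ n := by omega
  have hpos_i : ∀ t ∈ Icc i n, 0 < ℓ t := fun t ht => hpos t (Icc_subset_Icc_left hi1 ht)
  have hpos_j : ∀ t ∈ Icc j n, 0 < ℓ t := fun t ht => hpos_i t (Icc_subset_Icc_left hij.le ht)
  have hfirst : exp (pentropyOn (Icc i n) ℓ) < 1 + exp (pentropyOn (Icc (i + 1) n) ℓ) := by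
    rw [← insert_Icc_add_one_left_eq_Icc hin] at hpos_i ⊢
    refine exp_pentropyOn_insert_lt (by simp) hpos_i (nonempty_Icc.2 (by omega)) (ne_of_gt ?_)
    refine sum_div_exp_pentropyOn_lt (fun t ht => hpos_i t (mem_insert_of_mem ht))
      (fun t ht => hdec i ?_ t ?_ ?_) ⟨j, mem_Icc.2 ⟨hij, hjn⟩, hstrict⟩ <;>
      simp only [mem_Icc] at ht ⊢ <;> omega
  have hrest := add_exp_pentropyOn_Icc_le_add
    (fun t ht => hpos_i t (Icc_subset_Icc_left i.le_succ ht)) hij hjn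
  have hi : (1 : ℝ) ≤ i := by exact_mod_cast hi1
  rw [pentropyOn_replace_Icc hpos_i hi1 hin, pentropyOn_replace_Icc hpos_j (by omega) hjn]
  refine log_lt_log (by linarith [exp_pos (pentropyOn (Icc i n) ℓ)]) ?_
  push_cast at hrest
  linarith
end
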